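/- arXiv:2411.08784 — 2 statements merged into one kernel-verified Lean document; each statement's English description precedes it below -/
import Mathlib

section
/- Let α ∈ [0,1) and let β, c ≥ 1. There exists an instance of the 0-bus stop problem (α = 0) such that no feasible solution simultaneously provides β-justified representation and is a c-approximation of minimum cost. -/
open Finset

/-- Cost of an agent with terminals `ℓ < r` for a solution `S` in the α-bus stop problem. -/
def busCost (α ℓ r : ℚ) (S : Finset ℚ) : ℚ :=
  if h : S.Nonempty then
    min |ℓ - r| ((S ×ˢ S).inf' (h.product h)
      fun p => |ℓ - p.1| + α * |p.1 - p.2| + |r - p.2|)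
  else |ℓ - r|

/-- Total cost of a solution. -/
def totalCost (α : ℚ) {n : ℕ} (l r : Fin n → ℚ) (S : Finset ℚ) : ℚ :=
  ∑ i, busCost α (l i) (r i) S

/-- A solution `S` provides justified representation: for every coalition `M` of size at
least `2n/b` and every pair of stops `T ⊆ V`, some member of `M` is at least as well off
under `S` as under `T`. -/
def providesJR (α : ℚ) {n : ℕ} (l r : Fin n → ℚ) (V : Finset ℚ) (b : ℕ)
    (S : Finset ℚ) : Prop :=
  ∀ M : Finset (Fin n), (2 * n : ℚ) / b ≤ M.card →
    ∀ T ⊆ V, T.card = 2 →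
      ∃ i ∈ M, busCost α (l i) (r i) S ≤ busCost α (l i) (r i) T

lemma busCost_nonneg (ℓ r : ℚ) (S : Finset ℚ) : 0 ≤ busCost 0 ℓ r S := by
  unfold busCost
  split
  · apply le_min (abs_nonneg _)
    apply Finset.le_inf'
    intro p hp
    positivity
  · exact abs_nonneg _

lemma busCost_le_abs (α ℓ r : ℚ) (S : Finset ℚ) : busCost α ℓ r S ≤ |ℓ - r| := by
  unfold busCost
  split
  · exact min_le_left _ _
  · exact le_rfl

lemma busCost_le_of_mem (ℓ r x y : ℚ) (S : Finset ℚ) (hx : x ∈ S) (hy : y ∈ S) :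
    busCost 0 ℓ r S ≤ |ℓ - x| + |r - y| := by
  unfold busCost
  rw [dif_pos ⟨x, hx⟩]
  refine le_trans (min_le_right _ _) ?_
  have := Finset.inf'_le (f := fun p : ℚ × ℚ => |ℓ - p.1| + (0:ℚ) * |p.1 - p.2| + |r - p.2|)
    (b := (x, y)) (mem_product.mpr ⟨hx, hy⟩)
  refine le_trans this (le_of_eq ?_)
  simp

lemma busCost_pair_zero (ℓ r : ℚ) (S : Finset ℚ) (hx : ℓ ∈ S) (hy : r ∈ S) :
    busCost 0 ℓ r S = 0 := by
  have h1 := busCost_le_of_mem ℓ r ℓ r S hx hy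
  simp at h1
  exact le_antisymm h1 (busCost_nonneg _ _ _)

lemma busCost_lower (ℓ r E : ℚ) (S : Finset ℚ) (hE : E ≤ |ℓ - r|)
    (h : (∀ v ∈ S, E ≤ |ℓ - v|) ∨ (∀ v ∈ S, E ≤ |r - v|)) :
    E ≤ busCost 0 ℓ r S := by
  unfold busCost
  split
  · refine le_min hE (Finset.le_inf' _ _ ?_)
    intro p hp
    rw [mem_product] at hp
    rcases h with h | h
    · have := h p.1 hp.1
      have h2 : (0:ℚ) ≤ |r - p.2| := abs_nonneg _
      nlinarith [abs_nonneg (p.1 - p.2)]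
    · have := h p.2 hp.2
      nlinarith [abs_nonneg (p.1 - p.2), abs_nonneg (ℓ - p.1)]
  · exact hE

lemma busCost_eq_zero_mem (ℓ r : ℚ) (S : Finset ℚ) (hlr : ℓ ≠ r)
    (h : busCost 0 ℓ r S ≤ 0) : ℓ ∈ S ∧ r ∈ S := by
  unfold busCost at h
  split at h
  · rename_i hne
    have habs : (0:ℚ) < |ℓ - r| := abs_pos.mpr (sub_ne_zero.mpr hlr)
    have hinf : (S ×ˢ S).inf' (hne.product hne)
        (fun p => |ℓ - p.1| + 0 * |p.1 - p.2| + |r - p.2|) ≤ 0 := by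
      rcases min_le_iff.mp h with h' | h'
      · linarith
      · exact h'
    obtain ⟨p, hp, hpe⟩ := Finset.exists_mem_eq_inf' (hne.product hne)
      (fun p : ℚ × ℚ => |ℓ - p.1| + 0 * |p.1 - p.2| + |r - p.2|)
    rw [hpe] at hinf
    rw [mem_product] at hp
    have h1 : |ℓ - p.1| = 0 := by
      nlinarith [abs_nonneg (ℓ - p.1), abs_nonneg (r - p.2), abs_nonneg (p.1 - p.2)]
    have h2 : |r - p.2| = 0 := by
      nlinarith [abs_nonneg (ℓ - p.1), abs_nonneg (r - p.2), abs_nonneg (p.1 - p.2)]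
    rw [abs_eq_zero, sub_eq_zero] at h1 h2
    exact ⟨h1 ▸ hp.1, h2 ▸ hp.2⟩
  · rename_i hne
    have : |ℓ - r| = 0 := le_antisymm h (abs_nonneg _)
    exact absurd (sub_eq_zero.mp (abs_eq_zero.mp this)) hlr

section Geo
variable (c : ℚ) (k : ℕ)

def Rq : ℚ := 2*c*k
def Wq : ℚ := (Rq c k)^k
def Ej (j : ℕ) : ℚ := (Rq c k)^(k-1-j)
def pp (j : ℕ) : ℚ := 3*(Wq c k)*j
def qq (j : ℕ) : ℚ := pp c k j + Ej c k j
def XX : ℚ := 3*(Wq c k)*k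
def dd : ℚ := 1/(4*c*k^2)
def VV : Finset ℚ :=
  ((range k).image (pp c k)) ∪ ((range k).image (qq c k)) ∪ {XX c k, XX c k + dd c k}

variable (hc : 1 ≤ c) (hk : 2 ≤ k)
include hc hk

lemma hR : 4 ≤ Rq c k := by
  unfold Rq
  have : (2:ℚ) ≤ (k:ℚ) := by exact_mod_cast hk
  nlinarith

lemma hR1 : 1 ≤ Rq c k := le_trans (by norm_num) (hR c k hc hk)

lemma hE1 (j : ℕ) : 1 ≤ Ej c k j := one_le_pow₀ (hR1 c k hc hk)

lemma hW1 : 1 ≤ Wq c k := one_le_pow₀ (hR1 c k hc hk)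

lemma hEW (j : ℕ) : Ej c k j ≤ Wq c k :=
  pow_le_pow_right₀ (hR1 c k hc hk) (Nat.sub_le _ _ |>.trans (Nat.sub_le _ _))

lemma hdpos : 0 < dd c k := by
  unfold dd
  have : (2:ℚ) ≤ (k:ℚ) := by exact_mod_cast hk
  positivity

lemma hd1 : dd c k ≤ 1 := by
  unfold dd
  have h2 : (2:ℚ) ≤ (k:ℚ) := by exact_mod_cast hk
  rw [div_le_one (by nlinarith)]
  nlinarith

end Geo

lemma aux1 (W A d : ℚ) (hA : 3*W ≤ |A|) (hd : |d| ≤ 2*W) : W ≤ |A + d| := by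
  have h := abs_add_le (A + d) (-d)
  simp only [add_neg_cancel_right, abs_neg] at h
  linarith

lemma aux2 (W : ℚ) (hW : 0 ≤ W) {j u : ℕ} (h : j ≠ u) :
    3*W ≤ |3*W*(j:ℚ) - 3*W*(u:ℚ)| := by
  rcases Nat.lt_or_ge j u with hlt | hge
  · have h1 : (j:ℚ) + 1 ≤ (u:ℚ) := by exact_mod_cast hlt
    rw [abs_sub_comm, abs_of_nonneg (by nlinarith)]
    nlinarith
  · have hgt : u < j := lt_of_le_of_ne hge (Ne.symm h)
    have h1 : (u:ℚ) + 1 ≤ (j:ℚ) := by exact_mod_cast hgt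
    rw [abs_of_nonneg (by nlinarith)]
    nlinarith

section Sep
variable {c : ℚ} {k : ℕ} (hc : 1 ≤ c) (hk : 2 ≤ k)

omit hc hk in
lemma mem_VV {v : ℚ} (hv : v ∈ VV c k) :
    (∃ u < k, v = pp c k u) ∨ (∃ u < k, v = qq c k u) ∨ v = XX c k ∨ v = XX c k + dd c k := by
  simp only [VV, mem_union, mem_image, mem_range, mem_insert, mem_singleton] at hv
  rcases hv with (⟨u, hu, he⟩ | ⟨u, hu, he⟩) | he | he
  · exact Or.inl ⟨u, hu, he.symm⟩
  · exact Or.inr (Or.inl ⟨u, hu, he.symm⟩)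
  · exact Or.inr (Or.inr (Or.inl he))
  · exact Or.inr (Or.inr (Or.inr he))

include hc hk

lemma sepL {j : ℕ} (hj : j < k) {v : ℚ} (hv : v ∈ VV c k) (hne : v ≠ pp c k j) :
    Ej c k j ≤ |pp c k j - v| := by
  have hW1 := hW1 c k hc hk
  have hW0 : (0:ℚ) ≤ Wq c k := by linarith
  have hEW := hEW c k hc hk
  have hE1 := hE1 c k hc hk
  have hd1 := hd1 c k hc hk
  have hdpos := hdpos c k hc hk
  rcases mem_VV hv with ⟨u, hu, rfl⟩ | ⟨u, hu, rfl⟩ | rfl | rfl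
  · have huj : j ≠ u := fun h => hne (by rw [h])
    have heq : pp c k j - pp c k u = (3*(Wq c k)*(j:ℚ) - 3*(Wq c k)*(u:ℚ)) + 0 := by
      unfold pp; ring
    rw [heq]
    exact le_trans (hEW j) (aux1 _ _ _ (aux2 _ hW0 huj) (by simp; linarith))
  · rcases eq_or_ne j u with rfl | huj
    · have heq : pp c k j - qq c k j = -(Ej c k j) := by unfold qq; ring
      rw [heq, abs_neg, abs_of_nonneg (by linarith [hE1 j])]
    · have heq : pp c k j - qq c k u
          = (3*(Wq c k)*(j:ℚ) - 3*(Wq c k)*(u:ℚ)) + (-(Ej c k u)) := by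
        unfold qq pp; ring
      rw [heq]
      refine le_trans (hEW j) (aux1 _ _ _ (aux2 _ hW0 huj) ?_)
      rw [abs_neg, abs_of_nonneg (by linarith [hE1 u])]
      linarith [hEW u]
  · have huj : j ≠ k := Nat.ne_of_lt hj
    have heq : pp c k j - XX c k = (3*(Wq c k)*(j:ℚ) - 3*(Wq c k)*(k:ℚ)) + 0 := by
      unfold pp XX; ring
    rw [heq]
    exact le_trans (hEW j) (aux1 _ _ _ (aux2 _ hW0 huj) (by simp; linarith))
  · have huj : j ≠ k := Nat.ne_of_lt hj
    have heq : pp c k j - (XX c k + dd c k)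
        = (3*(Wq c k)*(j:ℚ) - 3*(Wq c k)*(k:ℚ)) + (-(dd c k)) := by
      unfold pp XX; ring
    rw [heq]
    refine le_trans (hEW j) (aux1 _ _ _ (aux2 _ hW0 huj) ?_)
    rw [abs_neg, abs_of_nonneg (le_of_lt hdpos)]
    linarith

lemma sepR {j : ℕ} (hj : j < k) {v : ℚ} (hv : v ∈ VV c k) (hne : v ≠ qq c k j) :
    Ej c k j ≤ |qq c k j - v| := by
  have hW1 := hW1 c k hc hk
  have hW0 : (0:ℚ) ≤ Wq c k := by linarith
  have hEW := hEW c k hc hk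
  have hE1 := hE1 c k hc hk
  have hd1 := hd1 c k hc hk
  have hdpos := hdpos c k hc hk
  rcases mem_VV hv with ⟨u, hu, rfl⟩ | ⟨u, hu, rfl⟩ | rfl | rfl
  · rcases eq_or_ne j u with rfl | huj
    · have heq : qq c k j - pp c k j = Ej c k j := by unfold qq; ring
      rw [heq, abs_of_nonneg (by linarith [hE1 j])]
    · have heq : qq c k j - pp c k u
          = (3*(Wq c k)*(j:ℚ) - 3*(Wq c k)*(u:ℚ)) + (Ej c k j) := by
        unfold qq pp; ring
      rw [heq]
      refine le_trans (hEW j) (aux1 _ _ _ (aux2 _ hW0 huj) ?_)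
      rw [abs_of_nonneg (by linarith [hE1 j])]
      linarith [hEW j]
  · have huj : j ≠ u := fun h => hne (by rw [h])
    have heq : qq c k j - qq c k u
        = (3*(Wq c k)*(j:ℚ) - 3*(Wq c k)*(u:ℚ)) + (Ej c k j - Ej c k u) := by
      unfold qq pp; ring
    rw [heq]
    refine le_trans (hEW j) (aux1 _ _ _ (aux2 _ hW0 huj) ?_)
    rw [abs_le]
    constructor <;> linarith [hE1 j, hE1 u, hEW j, hEW u]
  · have huj : j ≠ k := Nat.ne_of_lt hj
    have heq : qq c k j - XX c k
        = (3*(Wq c k)*(j:ℚ) - 3*(Wq c k)*(k:ℚ)) + (Ej c k j) := by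
      unfold qq pp XX; ring
    rw [heq]
    refine le_trans (hEW j) (aux1 _ _ _ (aux2 _ hW0 huj) ?_)
    rw [abs_of_nonneg (by linarith [hE1 j])]
    linarith [hEW j]
  · have huj : j ≠ k := Nat.ne_of_lt hj
    have heq : qq c k j - (XX c k + dd c k)
        = (3*(Wq c k)*(j:ℚ) - 3*(Wq c k)*(k:ℚ)) + (Ej c k j - dd c k) := by
      unfold qq pp XX; ring
    rw [heq]
    refine le_trans (hEW j) (aux1 _ _ _ (aux2 _ hW0 huj) ?_)
    rw [abs_le]
    constructor <;> linarith [hE1 j, hEW j, hd1, hdpos]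

/-- master distinctness: points in different blocks differ -/
lemma master_ne {u v : ℕ} (huv : u ≠ v) {e f : ℚ}
    (he : 0 ≤ e) (he2 : e ≤ Wq c k) (hf : 0 ≤ f) (hf2 : f ≤ Wq c k) :
    pp c k u + e ≠ pp c k v + f := by
  have hW1 := hW1 c k hc hk
  have hW0 : (0:ℚ) ≤ Wq c k := by linarith
  intro h
  have key : Wq c k ≤ |(3*(Wq c k)*(u:ℚ) - 3*(Wq c k)*(v:ℚ)) + (e - f)| :=
    aux1 _ _ _ (aux2 _ hW0 huv) (by rw [abs_le]; constructor <;> linarith)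
  rw [show (3*(Wq c k)*(u:ℚ) - 3*(Wq c k)*(v:ℚ)) + (e - f)
      = (pp c k u + e) - (pp c k v + f) from by unfold pp; ring, h, sub_self, abs_zero] at key
  linarith

omit hc hk in
lemma XX_eq_pp : XX c k = pp c k k := rfl

lemma ne_pp_qq {u v : ℕ} (hu : u ≤ k) (hv : v ≤ k) : pp c k u ≠ qq c k v := by
  rcases eq_or_ne u v with rfl | huv
  · unfold qq
    have := hE1 c k hc hk u
    intro h
    nth_rewrite 1 [← add_zero (pp c k u)] at h
    have h2 := add_left_cancel h
    linarith
  · have := master_ne hc hk huv (le_refl (0:ℚ)) (by linarith [hW1 c k hc hk]) (le_of_lt (by linarith [hE1 c k hc hk v] : (0:ℚ) < Ej c k v)) (hEW c k hc hk v)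
    simpa [qq] using this

lemma pp_inj {u v : ℕ} (huv : u ≠ v) : pp c k u ≠ pp c k v := by
  have := master_ne hc hk (e := 0) (f := 0) huv (le_refl _) (by linarith [hW1 c k hc hk]) (le_refl _) (by linarith [hW1 c k hc hk])
  simpa using this

lemma qq_inj {u v : ℕ} (huv : u ≠ v) : qq c k u ≠ qq c k v := by
  have h0 : ∀ w, (0:ℚ) ≤ Ej c k w := fun w => by linarith [hE1 c k hc hk w]
  have := master_ne hc hk huv (h0 u) (hEW c k hc hk u) (h0 v) (hEW c k hc hk v)
  simpa [qq] using this

lemma ne_X_dd : XX c k ≠ XX c k + dd c k := by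
  have := hdpos c k hc hk
  intro h
  nth_rewrite 1 [← add_zero (XX c k)] at h
  have h2 := add_left_cancel h
  linarith

end Sep


section Extra
variable {c : ℚ} {k : ℕ} (hc : 1 ≤ c) (hk : 2 ≤ k)

omit hc hk in
lemma pp_mem {u : ℕ} (hu : u < k) : pp c k u ∈ VV c k := by
  simp only [VV, mem_union, mem_image, mem_range, mem_insert, mem_singleton]
  exact Or.inl (Or.inl ⟨u, hu, rfl⟩)

omit hc hk in
lemma qq_mem {u : ℕ} (hu : u < k) : qq c k u ∈ VV c k := by
  simp only [VV, mem_union, mem_image, mem_range, mem_insert, mem_singleton]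
  exact Or.inl (Or.inr ⟨u, hu, rfl⟩)

omit hc hk in
lemma XX_mem : XX c k ∈ VV c k := by simp [VV]

omit hc hk in
lemma Xd_mem : XX c k + dd c k ∈ VV c k := by simp [VV]

include hc hk

lemma pp_ne_XX {u : ℕ} (hu : u < k) : pp c k u ≠ XX c k := by
  rw [XX_eq_pp]
  exact pp_inj hc hk (Nat.ne_of_lt hu)

lemma qq_ne_XX {u : ℕ} (hu : u < k) : qq c k u ≠ XX c k := by
  rw [XX_eq_pp]
  exact (ne_pp_qq hc hk (le_refl k) (le_of_lt hu)).symm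

lemma pp_ne_Xd {u : ℕ} (hu : u < k) : pp c k u ≠ XX c k + dd c k := by
  have hW1 := hW1 c k hc hk
  have := master_ne hc hk (u := u) (v := k) (Nat.ne_of_lt hu) (e := 0) (f := dd c k)
    (le_refl 0) (by linarith) (le_of_lt (hdpos c k hc hk)) (le_trans (hd1 c k hc hk) hW1)
  simpa [XX_eq_pp] using this

lemma qq_ne_Xd {u : ℕ} (hu : u < k) : qq c k u ≠ XX c k + dd c k := by
  have hW1 := hW1 c k hc hk
  have := master_ne hc hk (u := u) (v := k) (Nat.ne_of_lt hu) (e := Ej c k u) (f := dd c k)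
    (by linarith [hE1 c k hc hk u]) (hEW c k hc hk u)
    (le_of_lt (hdpos c k hc hk)) (le_trans (hd1 c k hc hk) hW1)
  simpa [XX_eq_pp, qq] using this

lemma card_VV : (VV c k).card = 2*k + 2 := by
  have h1 : ((range k).image (pp c k)).card = k := by
    rw [card_image_of_injOn (fun a _ b _ h => by_contra fun hne => pp_inj hc hk hne h),
      card_range]
  have h2 : ((range k).image (qq c k)).card = k := by
    rw [card_image_of_injOn (fun a _ b _ h => by_contra fun hne => qq_inj hc hk hne h),
      card_range]
  have hd12 : Disjoint ((range k).image (pp c k)) ((range k).image (qq c k)) := by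
    rw [disjoint_left]
    rintro v hv1 hv2
    obtain ⟨u, hu, rfl⟩ := mem_image.mp hv1
    obtain ⟨w, hw, hweq⟩ := mem_image.mp hv2
    rw [mem_range] at hu hw
    exact ne_pp_qq hc hk (le_of_lt hu) (le_of_lt hw) hweq.symm
  have hd3 : Disjoint (((range k).image (pp c k)) ∪ ((range k).image (qq c k)))
      ({XX c k, XX c k + dd c k} : Finset ℚ) := by
    rw [disjoint_left]
    rintro v hv1 hv2
    rw [mem_insert, mem_singleton] at hv2
    rw [mem_union] at hv1
    rcases hv1 with hv1 | hv1
    · obtain ⟨u, hu, rfl⟩ := mem_image.mp hv1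
      rw [mem_range] at hu
      rcases hv2 with h | h
      · exact pp_ne_XX hc hk hu h
      · exact pp_ne_Xd hc hk hu h
    · obtain ⟨u, hu, rfl⟩ := mem_image.mp hv1
      rw [mem_range] at hu
      rcases hv2 with h | h
      · exact qq_ne_XX hc hk hu h
      · exact qq_ne_Xd hc hk hu h
  rw [VV, card_union_of_disjoint hd3, card_union_of_disjoint hd12, h1, h2,
    card_pair (ne_X_dd hc hk)]
  ring

end Extra


set_option maxHeartbeats 1000000 in
/-- For all `β, c ≥ 1` there is an instance of the 0-bus stop problem such that no
feasible solution simultaneously provides β-JR and is a c-approximation of the minimum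
total cost. -/
theorem stmt_16 (α : ℚ) (h0 : 0 ≤ α) (h1 : α < 1)
    (β c : ℚ) (hβ : 1 ≤ β) (hc : 1 ≤ c) :
    ∃ (n b : ℕ) (V : Finset ℚ) (l r : Fin n → ℚ),
      0 < b ∧ (∀ i, l i < r i) ∧ (∀ i, l i ∈ V) ∧ (∀ i, r i ∈ V) ∧
      ∀ S : Finset ℚ, S ⊆ V → S.card ≤ b →
        ¬ ((∀ M : Finset (Fin n), β * ((2 * n : ℚ) / b) ≤ M.card →
              ∀ T ⊆ V, T.card = 2 →
                ∃ i ∈ M, busCost 0 (l i) (r i) S ≤ busCost 0 (l i) (r i) T) ∧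
           (∀ S' : Finset ℚ, S' ⊆ V → S'.card = S.card →
              totalCost 0 l r S ≤ c * totalCost 0 l r S')) := by
  classical
  obtain ⟨k, hk, hkβ⟩ : ∃ k : ℕ, 2 ≤ k ∧ β + 1 ≤ (k:ℚ) := by
    refine ⟨⌈β⌉₊ + 1, ?_, ?_⟩
    · have : 1 ≤ ⌈β⌉₊ := Nat.one_le_iff_ne_zero.mpr (by
        intro h
        have := Nat.ceil_eq_zero.mp h
        linarith)
      omega
    · have := Nat.le_ceil β
      push_cast
      linarith
  have hk2 : (2:ℚ) ≤ (k:ℚ) := by exact_mod_cast hk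
  have hR1 := hR1 c k hc hk
  have hW1 := hW1 c k hc hk
  have hE1 := hE1 c k hc hk
  have hdpos := hdpos c k hc hk
  have hd1 := hd1 c k hc hk
  refine ⟨k + k^2, 2*k, VV c k,
    (fun i => if (i:ℕ) < k then pp c k (i:ℕ) else XX c k),
    (fun i => if (i:ℕ) < k then qq c k (i:ℕ) else XX c k + dd c k),
    by omega, ?_, ?_, ?_, ?_⟩
  · intro i
    dsimp only
    split
    · unfold qq; linarith [hE1 (i:ℕ)]
    · linarith
  · intro i
    dsimp only
    split
    · exact pp_mem (by assumption)
    · exact XX_mem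
  · intro i
    dsimp only
    split
    · exact qq_mem (by assumption)
    · exact Xd_mem
  intro S hSV hScard hcon
  obtain ⟨hJR, hApx⟩ := hcon
  -- Step 1: JR forces the distant pair into S
  have hXS : XX c k ∈ S ∧ XX c k + dd c k ∈ S := by
    have hinj : Function.Injective (fun i : Fin (k^2) => (Fin.natAdd k i : Fin (k + k^2))) := by
      intro a b h
      have := congrArg Fin.val h
      simp only [Fin.natAdd] at this
      exact Fin.ext (by omega)
    have hMcard : ((univ : Finset (Fin (k^2))).image (fun i : Fin (k^2) => (Fin.natAdd k i : Fin (k + k^2)))).card = k^2 := by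
      rw [card_image_of_injective _ hinj, card_univ, Fintype.card_fin]
    have hM : β * ((2 * ((k + k^2 : ℕ) : ℚ)) / ((2*k : ℕ) : ℚ))
        ≤ (((univ : Finset (Fin (k^2))).image (fun i : Fin (k^2) => (Fin.natAdd k i : Fin (k + k^2)))).card : ℚ) := by
      rw [hMcard]
      have hknz : ((k:ℚ)) ≠ 0 := by linarith
      have hdiv : (2 * ((k + k^2 : ℕ) : ℚ)) / ((2*k : ℕ) : ℚ) = 1 + (k:ℚ) := by
        push_cast
        field_simp
      rw [hdiv]
      have hc2 : ((k^2 : ℕ) : ℚ) = (k:ℚ)^2 := by push_cast; ring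
      rw [hc2]
      nlinarith [mul_nonneg (by linarith : (0:ℚ) ≤ (k:ℚ) - 1 - β)
        (by linarith : (0:ℚ) ≤ 1 + (k:ℚ))]
    have hT2 : ({XX c k, XX c k + dd c k} : Finset ℚ).card = 2 := card_pair (ne_X_dd hc hk)
    have hTV : ({XX c k, XX c k + dd c k} : Finset ℚ) ⊆ VV c k := by
      intro v hv
      rw [mem_insert, mem_singleton] at hv
      rcases hv with rfl | rfl
      · exact XX_mem
      · exact Xd_mem
    obtain ⟨i, hiM, hle⟩ := hJR _ hM _ hTV hT2
    obtain ⟨i', _, rfl⟩ := mem_image.mp hiM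
    simp only [Fin.coe_natAdd] at hle
    rw [if_neg (by omega), if_neg (by omega)] at hle
    have hT0 : busCost 0 (XX c k) (XX c k + dd c k) {XX c k, XX c k + dd c k} ≤ 0 := by
      have := busCost_le_of_mem (XX c k) (XX c k + dd c k) (XX c k) (XX c k + dd c k)
        {XX c k, XX c k + dd c k} (mem_insert_self _ _) (by simp)
      simpa using this
    exact busCost_eq_zero_mem _ _ _ (ne_X_dd hc hk) (le_trans hle hT0)
  -- Step 2: some main pair is uncovered; take the least such
  set U : Finset ℕ := (range k).filter (fun j => pp c k j ∉ S ∨ qq c k j ∉ S) with hUdef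
  have hU : U.Nonempty := by
    by_contra hUe
    rw [not_nonempty_iff_eq_empty] at hUe
    have hVS : VV c k ⊆ S := by
      intro v hv
      rcases mem_VV hv with ⟨u, hu, rfl⟩ | ⟨u, hu, rfl⟩ | rfl | rfl
      · by_contra hns
        have : u ∈ U := mem_filter.mpr ⟨mem_range.mpr hu, Or.inl hns⟩
        rw [hUe] at this
        exact absurd this (notMem_empty u)
      · by_contra hns
        have : u ∈ U := mem_filter.mpr ⟨mem_range.mpr hu, Or.inr hns⟩
        rw [hUe] at this
        exact absurd this (notMem_empty u)
      · exact hXS.1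
      · exact hXS.2
    have h1 := card_le_card hVS
    rw [card_VV hc hk] at h1
    omega
  set j : ℕ := U.min' hU with hjdef
  have hjmem : j ∈ U := Finset.min'_mem U hU
  have hjk : j < k := mem_range.mp (mem_filter.mp hjmem).1
  have hjnc : pp c k j ∉ S ∨ qq c k j ∉ S := (mem_filter.mp hjmem).2
  have hmin : ∀ u, u < j → pp c k u ∈ S ∧ qq c k u ∈ S := by
    intro u hu
    by_contra hcc
    have huU : u ∈ U := mem_filter.mpr ⟨mem_range.mpr (by omega), by tauto⟩
    have := Finset.min'_le U u huU
    omega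
  -- Step 3: lower bound on totalCost S
  have hlow : Ej c k j ≤ totalCost 0
      (fun i : Fin (k + k^2) => if (i:ℕ) < k then pp c k (i:ℕ) else XX c k)
      (fun i : Fin (k + k^2) => if (i:ℕ) < k then qq c k (i:ℕ) else XX c k + dd c k) S := by
    have habs : |pp c k j - qq c k j| = Ej c k j := by
      rw [show pp c k j - qq c k j = -(Ej c k j) from by unfold qq; ring, abs_neg,
        abs_of_nonneg (by linarith [hE1 j])]
    have hterm : Ej c k j ≤ busCost 0 (pp c k j) (qq c k j) S := by
      apply busCost_lower _ _ _ _ (le_of_eq habs.symm)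
      rcases hjnc with hp | hq
      · exact Or.inl (fun v hv => sepL hc hk hjk (hSV hv) (fun h => hp (h ▸ hv)))
      · exact Or.inr (fun v hv => sepR hc hk hjk (hSV hv) (fun h => hq (h ▸ hv)))
    have hj' : (((⟨j, by omega⟩ : Fin (k + k^2)) : ℕ)) = j := rfl
    have := Finset.single_le_sum
      (f := fun i : Fin (k + k^2) => busCost 0
        (if (i:ℕ) < k then pp c k (i:ℕ) else XX c k)
        (if (i:ℕ) < k then qq c k (i:ℕ) else XX c k + dd c k) S)
      (fun i _ => busCost_nonneg _ _ _) (mem_univ (⟨j, by omega⟩ : Fin (k + k^2)))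
    simp only [hj'] at this
    rw [if_pos hjk, if_pos hjk] at this
    exact le_trans hterm this
  -- Step 4: generic upper bound on totalCost of a set covering pairs up to j
  have hbound : ∀ S' : Finset ℚ, pp c k j ∈ S' → qq c k j ∈ S' →
      (∀ u, u < j → pp c k u ∈ S' ∧ qq c k u ∈ S') →
      totalCost 0
        (fun i : Fin (k + k^2) => if (i:ℕ) < k then pp c k (i:ℕ) else XX c k)
        (fun i : Fin (k + k^2) => if (i:ℕ) < k then qq c k (i:ℕ) else XX c k + dd c k) S'
      ≤ ((k - (j+1) : ℕ) : ℚ) * (Rq c k)^(k-2-j) + ((k^2 : ℕ) : ℚ) * dd c k := by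
    intro S' hpj' hqj' hcov
    have hsplit : totalCost 0
        (fun i : Fin (k + k^2) => if (i:ℕ) < k then pp c k (i:ℕ) else XX c k)
        (fun i : Fin (k + k^2) => if (i:ℕ) < k then qq c k (i:ℕ) else XX c k + dd c k) S'
        = (∑ i : Fin k, busCost 0 (pp c k (i:ℕ)) (qq c k (i:ℕ)) S')
          + (∑ _i : Fin (k^2), busCost 0 (XX c k) (XX c k + dd c k) S') := by
      unfold totalCost
      rw [Fin.sum_univ_add]
      congr 1
      · apply Finset.sum_congr rfl
        intro i _
        simp only [Fin.coe_castAdd]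
        rw [if_pos i.isLt, if_pos i.isLt]
      · apply Finset.sum_congr rfl
        intro i _
        simp only [Fin.coe_natAdd]
        rw [if_neg (by omega), if_neg (by omega)]
    rw [hsplit]
    have hsum2 : (∑ _i : Fin (k^2), busCost 0 (XX c k) (XX c k + dd c k) S')
        ≤ ((k^2 : ℕ) : ℚ) * dd c k := by
      have hone : busCost 0 (XX c k) (XX c k + dd c k) S' ≤ dd c k := by
        refine le_trans (busCost_le_abs _ _ _ _) ?_
        rw [show XX c k - (XX c k + dd c k) = -(dd c k) from by ring, abs_neg,
          abs_of_nonneg (le_of_lt hdpos)]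
      calc (∑ _i : Fin (k^2), busCost 0 (XX c k) (XX c k + dd c k) S')
          ≤ ∑ _i : Fin (k^2), dd c k := Finset.sum_le_sum (fun i _ => hone)
        _ = ((k^2 : ℕ) : ℚ) * dd c k := by
            rw [Finset.sum_const, card_univ, Fintype.card_fin, nsmul_eq_mul]
    have hsum1 : (∑ i : Fin k, busCost 0 (pp c k (i:ℕ)) (qq c k (i:ℕ)) S')
        ≤ ((k - (j+1) : ℕ) : ℚ) * (Rq c k)^(k-2-j) := by
      have hstep : ∀ i : Fin k, busCost 0 (pp c k (i:ℕ)) (qq c k (i:ℕ)) S'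
          ≤ (if (i:ℕ) ≤ j then (0:ℚ) else (Rq c k)^(k-2-j)) := by
        intro i
        split
        · rename_i hij
          rcases Nat.lt_or_ge (i:ℕ) j with hlt | hge
          · exact le_of_eq (busCost_pair_zero _ _ _ (hcov _ hlt).1 (hcov _ hlt).2)
          · have : (i:ℕ) = j := by omega
            rw [this]
            exact le_of_eq (busCost_pair_zero _ _ _ hpj' hqj')
        · rename_i hij
          refine le_trans (busCost_le_abs _ _ _ _) ?_
          rw [show pp c k (i:ℕ) - qq c k (i:ℕ) = -(Ej c k (i:ℕ)) from by unfold qq; ring,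
            abs_neg, abs_of_nonneg (by linarith [hE1 (i:ℕ)])]
          exact pow_le_pow_right₀ hR1 (by omega)
      calc (∑ i : Fin k, busCost 0 (pp c k (i:ℕ)) (qq c k (i:ℕ)) S')
          ≤ ∑ i : Fin k, (if (i:ℕ) ≤ j then (0:ℚ) else (Rq c k)^(k-2-j)) :=
            Finset.sum_le_sum (fun i _ => hstep i)
        _ = ∑ u ∈ range k, (if u ≤ j then (0:ℚ) else (Rq c k)^(k-2-j)) :=
            Fin.sum_univ_eq_sum_range (fun u => if u ≤ j then (0:ℚ) else (Rq c k)^(k-2-j)) k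
        _ = ((k - (j+1) : ℕ) : ℚ) * (Rq c k)^(k-2-j) := by
            rw [range_eq_Ico, ← Finset.sum_Ico_consecutive _ (Nat.zero_le (j+1))
              (by omega : j+1 ≤ k)]
            rw [Finset.sum_eq_zero (fun u hu => if_pos (by
              have := (mem_Ico.mp hu).2; omega)), zero_add]
            rw [Finset.sum_congr rfl (fun u hu => if_neg (by
              have := (mem_Ico.mp hu).1; omega))]
            rw [Finset.sum_const, Nat.card_Ico, nsmul_eq_mul]
    linarith
  -- Step 5: build the alternative solution S'
  have hcardS2 : 2 ≤ S.card := by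
    have hsub : ({XX c k, XX c k + dd c k} : Finset ℚ) ⊆ S := by
      intro v hv
      rw [mem_insert, mem_singleton] at hv
      rcases hv with rfl | rfl
      · exact hXS.1
      · exact hXS.2
    have := card_le_card hsub
    rw [card_pair (ne_X_dd hc hk)] at this
    exact this
  obtain ⟨S', hS'V, hS'card, hS'p, hS'q, hS'cov⟩ :
      ∃ S' : Finset ℚ, S' ⊆ VV c k ∧ S'.card = S.card ∧ pp c k j ∈ S' ∧ qq c k j ∈ S' ∧
        (∀ u, u < j → pp c k u ∈ S' ∧ qq c k u ∈ S') := by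
    have hcovmem : ∀ u, u < j → pp c k u ∈ S.erase (XX c k) ∧ qq c k u ∈ S.erase (XX c k) := by
      intro u hu
      exact ⟨mem_erase.mpr ⟨pp_ne_XX hc hk (by omega), (hmin u hu).1⟩,
        mem_erase.mpr ⟨qq_ne_XX hc hk (by omega), (hmin u hu).2⟩⟩
    by_cases hpj : pp c k j ∈ S
    · have hqj : qq c k j ∉ S := by tauto
      refine ⟨insert (qq c k j) (S.erase (XX c k)), ?_, ?_, ?_, mem_insert_self _ _, ?_⟩
      · exact insert_subset (qq_mem hjk) ((erase_subset _ _).trans hSV)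
      · rw [card_insert_of_notMem (fun h => hqj (mem_of_mem_erase h)),
          card_erase_of_mem hXS.1]
        omega
      · exact mem_insert_of_mem (mem_erase.mpr ⟨pp_ne_XX hc hk hjk, hpj⟩)
      · intro u hu
        exact ⟨mem_insert_of_mem (hcovmem u hu).1, mem_insert_of_mem (hcovmem u hu).2⟩
    · by_cases hqj : qq c k j ∈ S
      · refine ⟨insert (pp c k j) (S.erase (XX c k)), ?_, ?_, mem_insert_self _ _, ?_, ?_⟩
        · exact insert_subset (pp_mem hjk) ((erase_subset _ _).trans hSV)
        · rw [card_insert_of_notMem (fun h => hpj (mem_of_mem_erase h)),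
            card_erase_of_mem hXS.1]
          omega
        · exact mem_insert_of_mem (mem_erase.mpr ⟨qq_ne_XX hc hk hjk, hqj⟩)
        · intro u hu
          exact ⟨mem_insert_of_mem (hcovmem u hu).1, mem_insert_of_mem (hcovmem u hu).2⟩
      · refine ⟨insert (pp c k j) (insert (qq c k j)
          ((S.erase (XX c k + dd c k)).erase (XX c k))), ?_, ?_, mem_insert_self _ _, ?_, ?_⟩
        · refine insert_subset (pp_mem hjk) (insert_subset (qq_mem hjk) ?_)
          exact ((erase_subset _ _).trans ((erase_subset _ _).trans hSV))
        · have hXin : XX c k ∈ S.erase (XX c k + dd c k) :=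
            mem_erase.mpr ⟨ne_X_dd hc hk, hXS.1⟩
          rw [card_insert_of_notMem (by
              intro h
              rcases mem_insert.mp h with h | h
              · exact ne_pp_qq hc hk (le_of_lt hjk) (le_of_lt hjk) h
              · exact hpj (mem_of_mem_erase (mem_of_mem_erase h))),
            card_insert_of_notMem (fun h => hqj (mem_of_mem_erase (mem_of_mem_erase h))),
            card_erase_of_mem hXin, card_erase_of_mem hXS.2]
          omega
        · exact mem_insert_of_mem (mem_insert_self _ _)
        · intro u hu
          have h1 : pp c k u ∈ (S.erase (XX c k + dd c k)).erase (XX c k) :=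
            mem_erase.mpr ⟨pp_ne_XX hc hk (by omega),
              mem_erase.mpr ⟨pp_ne_Xd hc hk (by omega), (hmin u hu).1⟩⟩
          have h2 : qq c k u ∈ (S.erase (XX c k + dd c k)).erase (XX c k) :=
            mem_erase.mpr ⟨qq_ne_XX hc hk (by omega),
              mem_erase.mpr ⟨qq_ne_Xd hc hk (by omega), (hmin u hu).2⟩⟩
          exact ⟨mem_insert_of_mem (mem_insert_of_mem h1),
            mem_insert_of_mem (mem_insert_of_mem h2)⟩
  -- Step 6: final arithmetic contradiction
  have hkq0 : ((k:ℚ)) ≠ 0 := by linarith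
  have hc0 : c ≠ 0 := by linarith
  have hdd2 : ((k^2 : ℕ) : ℚ) * dd c k = 1/(4*c) := by
    unfold dd
    push_cast
    field_simp
  have harith : c * (((k - (j+1) : ℕ) : ℚ) * (Rq c k)^(k-2-j) + ((k^2 : ℕ) : ℚ) * dd c k)
      < Ej c k j := by
    rw [hdd2]
    have hcast : ((k - (j+1) : ℕ) : ℚ) = (k:ℚ) - ((j:ℚ) + 1) := by
      rw [Nat.cast_sub (by omega : j+1 ≤ k)]
      push_cast
      ring
    rw [hcast]
    unfold Ej
    have hcp : (0:ℚ) < c := by linarith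
    have hq : c * (1/(4*c)) = 1/4 := by field_simp
    rcases Nat.lt_or_ge (j+1) k with hlt | hge
    · have hexp : k - 1 - j = (k - 2 - j) + 1 := by omega
      rw [hexp, pow_succ, mul_add, hq]
      have hX : (1:ℚ) ≤ (Rq c k)^(k-2-j) := one_le_pow₀ hR1
      have hD1 : (1:ℚ) ≤ (k:ℚ) - ((j:ℚ) + 1) := by
        have : (j:ℚ) + 2 ≤ (k:ℚ) := by exact_mod_cast hlt
        linarith
      have hDk : (k:ℚ) - ((j:ℚ) + 1) ≤ (k:ℚ) := by
        have : (0:ℚ) ≤ (j:ℚ) + 1 := by positivity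
        linarith
      have hRck : Rq c k = 2*c*(k:ℚ) := rfl
      have h6 : (Rq c k)^(k-2-j) * Rq c k = 2*c*(k:ℚ)*((Rq c k)^(k-2-j)) := by
        rw [hRck]; ring
      rw [h6]
      have h7 : (2:ℚ) ≤ c * (k:ℚ) * ((Rq c k)^(k-2-j)) := by
        nlinarith [hc, hk2, hX]
      nlinarith [hX, hc, hk2, hD1, hDk, h7, hcp]
    · have h0' : (k:ℚ) - ((j:ℚ) + 1) = 0 := by
        have hkj : k = j + 1 := by omega
        rw [hkj]; push_cast; ring
      have h1 : k - 1 - j = 0 := by omega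
      rw [h0', h1, pow_zero, zero_mul, mul_add, mul_zero, zero_add, hq]
      norm_num
  have hfin := hApx S' hS'V hS'card
  have hb := hbound S' hS'p hS'q hS'cov
  have hc' : c * totalCost 0 _ _ S' ≤ c * (((k - (j+1) : ℕ) : ℚ) * (Rq c k)^(k-2-j)
      + ((k^2 : ℕ) : ℚ) * dd c k) := mul_le_mul_of_nonneg_left hb (by linarith)
  linarith
end

section
/- Let α ∈ [0,1). There exists an instance of the α-bus stop problem in which no feasible support-maximizing solution provides justified representation. Concretely, take 12 agents, V = {1,…,10}, b = 4, with three agents of type (1,2), three of type (3,4), two of type (5,8), two of type (6,9), and two of type (7,10): the unique feasible support-maximizing solution is S = {1,2,3,4}, and the coalition of the last six agents with T = {7,8} satisfies |M| = 2n/b and cᵢ(T) < cᵢ(S) for all i ∈ M. -/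
open Finset

/-- The instance of `stmt_17`: 12 agents on `V = {1,…,10}` with budget 4; three agents of
type `(1,2)`, three of type `(3,4)`, two each of types `(5,8)`, `(6,9)`, `(7,10)`. -/
def V17 : Finset ℚ := (Finset.Icc (1 : ℕ) 10).image (fun j : ℕ => (j : ℚ))

def l17 : Fin 12 → ℚ := ![1, 1, 1, 3, 3, 3, 5, 5, 6, 6, 7, 7]

def r17 : Fin 12 → ℚ := ![2, 2, 2, 4, 4, 4, 8, 8, 9, 9, 10, 10]

/-- The support of a stop: the number of agents having it as a terminal. -/
def supp17 (x : ℚ) : ℕ :=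
  (Finset.univ.filter fun i : Fin 12 => l17 i = x ∨ r17 i = x).card

lemma busCost_le_pair (α ℓ r x y : ℚ) (S : Finset ℚ) (hx : x ∈ S) (hy : y ∈ S) :
    busCost α ℓ r S ≤ |ℓ - x| + α * |x - y| + |r - y| := by
  unfold busCost
  rw [dif_pos ⟨x, hx⟩]
  refine min_le_of_right_le ?_
  have := Finset.inf'_le (s := S ×ˢ S)
    (fun p : ℚ × ℚ => |ℓ - p.1| + α * |p.1 - p.2| + |r - p.2|)
    (b := (x, y)) (Finset.mem_product.mpr ⟨hx, hy⟩)
  exact this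

lemma busCost_eq_self (α ℓ r : ℚ) (S : Finset ℚ)
    (h : ∀ x ∈ S, ∀ y ∈ S, |ℓ - r| ≤ |ℓ - x| + α * |x - y| + |r - y|) :
    busCost α ℓ r S = |ℓ - r| := by
  unfold busCost
  split
  · exact min_eq_left (Finset.le_inf' _ _ fun p hp => by
      obtain ⟨h1, h2⟩ := Finset.mem_product.mp hp
      exact h p.1 h1 p.2 h2)
  · rfl

lemma V17_eq : V17 = ({1,2,3,4,5,6,7,8,9,10} : Finset ℚ) := by decide

/-- The cost under any `S ⊆ {1,2,3,4}` of an agent with `5 ≤ ℓ` and `r = ℓ + 3` is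
exactly the direct distance `3`. -/
lemma cost_far (α ℓ r : ℚ) (h0 : 0 ≤ α) (S : Finset ℚ)
    (hS : S ⊆ ({1, 2, 3, 4} : Finset ℚ)) (hℓ : 5 ≤ ℓ) (hr : r = ℓ + 3) :
    busCost α ℓ r S = 3 := by
  have h3 : |ℓ - r| = 3 := by rw [hr, show ℓ - (ℓ + 3) = -3 by ring]; norm_num
  have hkey : ∀ x ∈ S, ∀ y ∈ S, |ℓ - r| ≤ |ℓ - x| + α * |x - y| + |r - y| := by
    intro x hx y hy
    have hx4 : x ≤ 4 := by
      have h := hS hx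
      simp only [Finset.mem_insert, Finset.mem_singleton] at h
      rcases h with h|h|h|h <;> rw [h] <;> norm_num
    have hy4 : y ≤ 4 := by
      have h := hS hy
      simp only [Finset.mem_insert, Finset.mem_singleton] at h
      rcases h with h|h|h|h <;> rw [h] <;> norm_num
    have a1 : ℓ - x ≤ |ℓ - x| := le_abs_self _
    have a2 : r - y ≤ |r - y| := le_abs_self _
    have a3 : 0 ≤ α * |x - y| := mul_nonneg h0 (abs_nonneg _)
    rw [h3]
    linarith [hr.ge, hr.le]
  rw [busCost_eq_self α ℓ r S hkey, h3]

/-- For `α ∈ [0,1)`, in the instance with 12 agents, `V = {1,…,10}`, `b = 4`: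
the unique support-maximizing solution of size 4 is `{1,2,3,4}`; the coalition of the
last six agents with `T = {7,8}` has size `2n/b` and witnesses a JR violation; and no
feasible support-maximizing solution provides JR. -/
theorem stmt_17 (α : ℚ) (h0 : 0 ≤ α) (h1 : α < 1) :
    (∀ S : Finset ℚ, S ⊆ V17 → S.card = 4 →
      (∀ v ∈ V17, v ∉ S → ∀ w ∈ S, supp17 v ≤ supp17 w) →
      S = ({1, 2, 3, 4} : Finset ℚ)) ∧
    (2 * 12 : ℚ) / 4 ≤ ((({6, 7, 8, 9, 10, 11} : Finset (Fin 12)).card : ℚ)) ∧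
    (∀ i ∈ ({6, 7, 8, 9, 10, 11} : Finset (Fin 12)),
      busCost α (l17 i) (r17 i) ({7, 8} : Finset ℚ)
        < busCost α (l17 i) (r17 i) ({1, 2, 3, 4} : Finset ℚ)) ∧
    (∀ S : Finset ℚ, S ⊆ V17 → S.card ≤ 4 →
      (∀ v ∈ V17, v ∉ S → ∀ w ∈ S, supp17 v ≤ supp17 w) →
      ¬ providesJR α l17 r17 V17 4 S) := by
  have card6 : (({6, 7, 8, 9, 10, 11} : Finset (Fin 12)).card) = 6 := by decide
  -- cost under `T = {7, 8}` of an agent whose terminals are close to `7` and `8`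
  have cost_T_lt : ∀ ℓ r : ℚ, |ℓ - 7| + |r - 8| ≤ 2 →
      busCost α ℓ r ({7, 8} : Finset ℚ) < 3 := by
    intro ℓ r hlr
    have h := busCost_le_pair α ℓ r 7 8 ({7, 8} : Finset ℚ) (by decide) (by decide)
    have h78 : |(7 : ℚ) - 8| = 1 := by norm_num
    rw [h78, mul_one] at h
    linarith
  have hT : ∀ i ∈ ({6, 7, 8, 9, 10, 11} : Finset (Fin 12)),
      busCost α (l17 i) (r17 i) ({7, 8} : Finset ℚ) < 3 := by
    intro i hi
    fin_cases hi
    · exact cost_T_lt 5 8 (by norm_num)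
    · exact cost_T_lt 5 8 (by norm_num)
    · exact cost_T_lt 6 9 (by norm_num)
    · exact cost_T_lt 6 9 (by norm_num)
    · exact cost_T_lt 7 10 (by norm_num)
    · exact cost_T_lt 7 10 (by norm_num)
  -- costs under any `S ⊆ {1,2,3,4}` for the last six agents
  have hS3 : ∀ S : Finset ℚ, S ⊆ ({1, 2, 3, 4} : Finset ℚ) →
      ∀ i ∈ ({6, 7, 8, 9, 10, 11} : Finset (Fin 12)),
      busCost α (l17 i) (r17 i) S = 3 := by
    intro S hS i hi
    fin_cases hi
    · exact cost_far α 5 8 h0 S hS (by norm_num) (by norm_num)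
    · exact cost_far α 5 8 h0 S hS (by norm_num) (by norm_num)
    · exact cost_far α 6 9 h0 S hS (by norm_num) (by norm_num)
    · exact cost_far α 6 9 h0 S hS (by norm_num) (by norm_num)
    · exact cost_far α 7 10 h0 S hS (by norm_num) (by norm_num)
    · exact cost_far α 7 10 h0 S hS (by norm_num) (by norm_num)
  -- part 1: uniqueness of the support-maximizing solution of size 4
  have part1 : ∀ S : Finset ℚ, S ⊆ V17 → S.card = 4 →
      (∀ v ∈ V17, v ∉ S → ∀ w ∈ S, supp17 v ≤ supp17 w) →
      S = ({1, 2, 3, 4} : Finset ℚ) := by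
    intro S hSV hcard hmax
    by_contra hne
    -- S has an element outside {1,2,3,4}
    have hw : ∃ w ∈ S, w ∉ ({1, 2, 3, 4} : Finset ℚ) := by
      by_contra hcon
      push_neg at hcon
      exact hne (Finset.eq_of_subset_of_card_le hcon (by simp [hcard]))
    -- {1,2,3,4} has an element outside S
    have hv : ∃ v ∈ ({1, 2, 3, 4} : Finset ℚ), v ∉ S := by
      by_contra hcon
      push_neg at hcon
      exact hne (Finset.eq_of_subset_of_card_le hcon (by simp [hcard])).symm
    obtain ⟨w, hwS, hw4⟩ := hw
    obtain ⟨v, hv4, hvS⟩ := hv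
    have hvV : v ∈ V17 := by rw [V17_eq]; fin_cases hv4 <;> decide
    have hle := hmax v hvV hvS w hwS
    have hsv : supp17 v = 3 := by fin_cases hv4 <;> decide
    have hsw : supp17 w = 2 := by
      have hwV : w ∈ V17 := hSV hwS
      rw [V17_eq] at hwV
      fin_cases hwV <;> first | (exfalso; exact hw4 (by decide)) | decide
    omega
  refine ⟨part1, by rw [card6]; norm_num, ?_, ?_⟩
  · intro i hi
    have h3 := hS3 ({1, 2, 3, 4} : Finset ℚ) (by decide) i hi
    rw [h3]
    exact hT i hi
  · intro S hSV hcard hmax hJR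
    -- S ⊆ {1,2,3,4}
    have hS4 : S ⊆ ({1, 2, 3, 4} : Finset ℚ) := by
      intro w hwS
      by_contra hw4
      have hv : ∃ v ∈ ({1, 2, 3, 4} : Finset ℚ), v ∉ S := by
        by_contra hcon
        push_neg at hcon
        have hsub : insert w ({1, 2, 3, 4} : Finset ℚ) ⊆ S :=
          Finset.insert_subset hwS hcon
        have := Finset.card_le_card hsub
        rw [Finset.card_insert_of_notMem hw4] at this
        simp at this
        omega
      obtain ⟨v, hv4, hvS⟩ := hv
      have hvV : v ∈ V17 := by rw [V17_eq]; fin_cases hv4 <;> decide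
      have hle := hmax v hvV hvS w hwS
      have hsv : supp17 v = 3 := by fin_cases hv4 <;> decide
      have hsw : supp17 w = 2 := by
        have hwV : w ∈ V17 := hSV hwS
        rw [V17_eq] at hwV
        fin_cases hwV <;> first | (exfalso; exact hw4 (by decide)) | decide
      omega
    obtain ⟨i, hi, hle⟩ := hJR ({6, 7, 8, 9, 10, 11} : Finset (Fin 12))
      (by rw [card6]; norm_num) ({7, 8} : Finset ℚ) (by rw [V17_eq]; decide) (by decide)
    rw [hS3 S hS4 i hi] at hle
    exact absurd hle (not_le.mpr (hT i hi))
end
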